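/- For every n ≥ 2, the parallel sawtooth alternation of length 3n is a simple permutation. Here the parallel sawtooth alternation of length 3n is the permutation σ of length 3n defined on positions grouped in consecutive triples: for 1 ≤ i ≤ n, σ(3i−2) = n + 2i, σ(3i−1) = i, σ(3i) = n + 2i − 1. -/
import Mathlib


/-- `I` is an interval of the permutation `π`: a nonempty set of positions that is
contiguous and whose image under `π` is contiguous. -/
def IsPermInterval {n : ℕ} (π : Equiv.Perm (Fin n)) (I : Set (Fin n)) : Prop :=
  I.Nonempty ∧
  (∀ a b e : Fin n, a ∈ I → b ∈ I → a ≤ e → e ≤ b → e ∈ I) ∧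
  (∀ a b e : Fin n, a ∈ I → b ∈ I → π a ≤ π e → π e ≤ π b → e ∈ I)

/-- A permutation is simple if its only intervals are singletons and the whole set. -/
def IsSimplePerm {n : ℕ} (π : Equiv.Perm (Fin n)) : Prop :=
  ∀ I : Set (Fin n), IsPermInterval π I → (∃ i, I = {i}) ∨ I = Set.univ

/-- The parallel sawtooth alternation of length `3n` is simple for `n ≥ 2`.
In 0-indexed form, for `0 ≤ t < n`: `σ(3t) = n + 2t + 1`, `σ(3t+1) = t`,
`σ(3t+2) = n + 2t` (corresponding to the 1-indexed definition
`σ(3i−2) = n + 2i`, `σ(3i−1) = i`, `σ(3i) = n + 2i − 1`). -/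
theorem stmt5 {n : ℕ} (hn : 2 ≤ n) (σ : Equiv.Perm (Fin (3 * n)))
    (hσ : ∀ t : ℕ, ∀ ht : t < n,
      (σ ⟨3 * t, by omega⟩ : ℕ) = n + 2 * t + 1 ∧
      (σ ⟨3 * t + 1, by omega⟩ : ℕ) = t ∧
      (σ ⟨3 * t + 2, by omega⟩ : ℕ) = n + 2 * t) :
    IsSimplePerm σ := by
  rintro I ⟨hne, hpos, hval⟩
  by_cases hs : ∃ i, I = {i}
  · exact Or.inl hs
  right
  obtain ⟨x, hx⟩ := hne
  have hy : ∃ y ∈ I, y ≠ x := by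
    by_contra h
    push_neg at h
    exact hs ⟨x, Set.eq_singleton_iff_unique_mem.mpr ⟨hx, h⟩⟩
  obtain ⟨y, hyI, hyx⟩ := hy
  -- nat-valued versions of convexity
  have posC : ∀ (a b e : Fin (3*n)), a ∈ I → b ∈ I → (a:ℕ) ≤ e → (e:ℕ) ≤ b → e ∈ I := by
    intro a b e ha hb h1 h2
    exact hpos a b e ha hb (Fin.le_def.mpr h1) (Fin.le_def.mpr h2)
  have valC : ∀ (a b e : Fin (3*n)), a ∈ I → b ∈ I → (σ a : ℕ) ≤ σ e → (σ e : ℕ) ≤ σ b → e ∈ I := by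
    intro a b e ha hb h1 h2
    exact hval a b e ha hb (Fin.le_def.mpr h1) (Fin.le_def.mpr h2)
  -- values at positions, nat form
  have h0 : ∀ t : ℕ, ∀ (ht : t < n) (h : 3*t < 3*n), (σ ⟨3*t, h⟩ : ℕ) = n+2*t+1 :=
    fun t ht h => (hσ t ht).1
  have h1 : ∀ t : ℕ, ∀ (ht : t < n) (h : 3*t+1 < 3*n), (σ ⟨3*t+1, h⟩ : ℕ) = t :=
    fun t ht h => (hσ t ht).2.1
  have h2 : ∀ t : ℕ, ∀ (ht : t < n) (h : 3*t+2 < 3*n), (σ ⟨3*t+2, h⟩ : ℕ) = n+2*t :=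
    fun t ht h => (hσ t ht).2.2
  -- step 1: get p with small value and q with large value, both in I
  have step1 : ∃ p q : Fin (3*n), p ∈ I ∧ q ∈ I ∧ (σ p : ℕ) < n ∧ n ≤ (σ q : ℕ) := by
    -- wlog x < y
    obtain ⟨u, v, huI, hvI, huv⟩ : ∃ u v : Fin (3*n), u ∈ I ∧ v ∈ I ∧ (u:ℕ) < v := by
      rcases Nat.lt_or_ge (x : ℕ) (y : ℕ) with h | h
      · exact ⟨x, y, hx, hyI, h⟩
      · refine ⟨y, x, hyI, hx, lt_of_le_of_ne h ?_⟩
        exact fun he => hyx (Fin.ext he)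
    have hu3 : (u:ℕ) < 3*n := u.isLt
    have hv3 : (v:ℕ) < 3*n := v.isLt
    have hmod : (u:ℕ) % 3 = 0 ∨ (u:ℕ) % 3 = 1 ∨ (u:ℕ) % 3 = 2 := by omega
    rcases hmod with hm | hm | hm
    · -- u = 3t, u+1 = 3t+1 ∈ I
      set t := (u:ℕ) / 3 with htdef
      have hu : (u:ℕ) = 3*t := by omega
      have ht : t < n := by omega
      have hlt : 3*t+1 < 3*n := by omega
      have hpI : (⟨3*t+1, hlt⟩ : Fin (3*n)) ∈ I :=
        posC u v _ huI hvI (by simp only [Fin.val_mk]; omega) (by first | omega | (simp only [Fin.val_mk]; omega))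
      refine ⟨⟨3*t+1, hlt⟩, u, hpI, huI, ?_, ?_⟩
      · rw [h1 t ht hlt]; exact ht
      · have : u = (⟨3*t, by omega⟩ : Fin (3*n)) := Fin.ext hu
        rw [this, h0 t ht]; omega
    · -- u = 3t+1
      set t := (u:ℕ) / 3 with htdef
      have hu : (u:ℕ) = 3*t+1 := by omega
      have ht : t < n := by omega
      have hlt : 3*t+2 < 3*n := by omega
      have hqI : (⟨3*t+2, hlt⟩ : Fin (3*n)) ∈ I :=
        posC u v _ huI hvI (by first | omega | (simp only [Fin.val_mk]; omega)) (by first | omega | (simp only [Fin.val_mk]; omega))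
      refine ⟨u, ⟨3*t+2, hlt⟩, huI, hqI, ?_, ?_⟩
      · have : u = (⟨3*t+1, by omega⟩ : Fin (3*n)) := Fin.ext hu
        rw [this, h1 t ht]; exact ht
      · rw [h2 t ht hlt]; omega
    · -- u = 3t+2, u+1 = 3t+3 ∈ I, pull in 3t by value, then 3t+1 by position
      set t := (u:ℕ) / 3 with htdef
      have hu : (u:ℕ) = 3*t+2 := by omega
      have ht : t < n := by omega
      have ht1 : t+1 < n := by omega
      have ha3 : 3*(t+1) < 3*n := by omega
      have hbI : (⟨3*(t+1), ha3⟩ : Fin (3*n)) ∈ I :=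
        posC u v _ huI hvI (by first | omega | (simp only [Fin.val_mk]; omega)) (by first | omega | (simp only [Fin.val_mk]; omega))
      have hue : u = (⟨3*t+2, by omega⟩ : Fin (3*n)) := Fin.ext hu
      have huval : (σ u : ℕ) = n+2*t := by rw [hue, h2 t ht]
      have hbval : (σ (⟨3*(t+1), ha3⟩ : Fin (3*n)) : ℕ) = n+2*(t+1)+1 := h0 (t+1) ht1 ha3
      have h3t : 3*t < 3*n := by omega
      have heval : (σ (⟨3*t, h3t⟩ : Fin (3*n)) : ℕ) = n+2*t+1 := h0 t ht h3t
      have heI : (⟨3*t, h3t⟩ : Fin (3*n)) ∈ I :=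
        valC u _ _ huI hbI (by first | omega | (simp only [Fin.val_mk]; omega)) (by first | omega | (simp only [Fin.val_mk]; omega))
      have hlt : 3*t+1 < 3*n := by omega
      have hpI : (⟨3*t+1, hlt⟩ : Fin (3*n)) ∈ I :=
        posC _ u _ heI huI (by first | omega | (simp only [Fin.val_mk]; omega)) (by first | omega | (simp only [Fin.val_mk]; omega))
      refine ⟨⟨3*t+1, hlt⟩, u, hpI, huI, ?_, by first | omega | (simp only [Fin.val_mk]; omega)⟩
      rw [h1 t ht hlt]; exact ht
  obtain ⟨p, q, hpI, hqI, hpv, hqv⟩ := step1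
  -- step 2: positions 2 and 3n-2 are in I
  have hlt2 : 3*0+2 < 3*n := by omega
  have hv2 : (σ (⟨3*0+2, hlt2⟩ : Fin (3*n)) : ℕ) = n + 2*0 := h2 0 (by omega) hlt2
  have h2I : (⟨3*0+2, hlt2⟩ : Fin (3*n)) ∈ I :=
    valC p q _ hpI hqI (by first | omega | (simp only [Fin.val_mk]; omega)) (by first | omega | (simp only [Fin.val_mk]; omega))
  have hltn2 : 3*(n-1)+1 < 3*n := by omega
  have hvn2 : (σ (⟨3*(n-1)+1, hltn2⟩ : Fin (3*n)) : ℕ) = n-1 := h1 (n-1) (by first | omega | (simp only [Fin.val_mk]; omega)) hltn2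
  have hn2I : (⟨3*(n-1)+1, hltn2⟩ : Fin (3*n)) ∈ I :=
    valC p q _ hpI hqI (by first | omega | (simp only [Fin.val_mk]; omega)) (by first | omega | (simp only [Fin.val_mk]; omega))
  -- step 3: position 3n-3 = 3(n-1) is in I, with the max value 3n-1
  have hltn3 : 3*(n-1) < 3*n := by omega
  have hn3I : (⟨3*(n-1), hltn3⟩ : Fin (3*n)) ∈ I :=
    posC _ _ _ h2I hn2I (by first | omega | (simp only [Fin.val_mk]; omega)) (by first | omega | (simp only [Fin.val_mk]; omega))
  have hvn3 : (σ (⟨3*(n-1), hltn3⟩ : Fin (3*n)) : ℕ) = n+2*(n-1)+1 := h0 (n-1) (by first | omega | (simp only [Fin.val_mk]; omega)) hltn3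
  -- step 4: positions 0 and 3n-1 are in I
  have hlt0 : 3*0 < 3*n := by omega
  have hv0 : (σ (⟨3*0, hlt0⟩ : Fin (3*n)) : ℕ) = n+2*0+1 := h0 0 (by first | omega | (simp only [Fin.val_mk]; omega)) hlt0
  have h0I : (⟨3*0, hlt0⟩ : Fin (3*n)) ∈ I :=
    valC _ _ _ h2I hn3I (by first | omega | (simp only [Fin.val_mk]; omega)) (by first | omega | (simp only [Fin.val_mk]; omega))
  have hltl : 3*(n-1)+2 < 3*n := by omega
  have hvl : (σ (⟨3*(n-1)+2, hltl⟩ : Fin (3*n)) : ℕ) = n+2*(n-1) := h2 (n-1) (by first | omega | (simp only [Fin.val_mk]; omega)) hltl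
  have hlI : (⟨3*(n-1)+2, hltl⟩ : Fin (3*n)) ∈ I :=
    valC _ _ _ h2I hn3I (by first | omega | (simp only [Fin.val_mk]; omega)) (by first | omega | (simp only [Fin.val_mk]; omega))
  -- step 5: everything is in I
  ext z
  simp only [Set.mem_univ, iff_true]
  exact posC _ _ z h0I hlI (by first | omega | (simp only [Fin.val_mk]; omega)) (by first | omega | (simp only [Fin.val_mk]; omega))
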